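/- arXiv:2412.17008 — 3 statements merged into one kernel-verified Lean document; each statement's English description precedes it below -/
import Mathlib

section
/- Fix k, d ∈ ℕ⁺ and C, σ > 0, and let z_1,...,z_k be i.i.d. with z_l ~ N(0, k(Cσ)²I_d). For a k×k real matrix X that is lower triangular, has nonnegative entries, and whose t-th row satisfies Σ_{l=1}^t X_{t,l} = 1 for every t ∈ [k], define z*_t := Σ_{l=1}^t X_{t,l} z_l, N(X) := Σ_{t=1}^k E[‖z*_t‖₂²], P(X) := Σ_{t=1}^k E[‖z*_t‖₂⁴], and Q(X) := Σ_{t=1}^k √(E[‖z*_t‖₂⁴]). Then the uniform-averaging matrix X* with X*_{t,l} = 1/t for l ≤ t (and 0 otherwise) minimizes each of N, P, Q over all such matrices, and moreover N(X*) ≤ d k(Cσ)²(1 + log k), P(X*) ≤ d(d+2) k²(Cσ)⁴ π²/6, and Q(X*) ≤ √(d(d+2)) · k(Cσ)²(1 + log k). -/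
open MeasureTheory ProbabilityTheory

/-- The squared Euclidean norm of the combined noise `z*_t = Σ_{l ≤ t} X_{t,l} z_l`. -/
noncomputable def sqNormCombined {Ω : Type*} {k d : ℕ} (z : Fin k → Fin d → Ω → ℝ)
    (X : Fin k → Fin k → ℝ) (t : Fin k) (ω : Ω) : ℝ :=
  ∑ i, (∑ l ∈ Finset.Iic t, X t l * z l i ω) ^ 2

/-- `N(X) = Σ_t E[‖z*_t‖₂²]`. -/
noncomputable def Nsum {Ω : Type*} [MeasurableSpace Ω] (P : Measure Ω) {k d : ℕ}
    (z : Fin k → Fin d → Ω → ℝ) (X : Fin k → Fin k → ℝ) : ℝ :=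
  ∑ t, ∫ ω, sqNormCombined z X t ω ∂P

/-- `P(X) = Σ_t E[‖z*_t‖₂⁴]`. -/
noncomputable def Psum {Ω : Type*} [MeasurableSpace Ω] (P : Measure Ω) {k d : ℕ}
    (z : Fin k → Fin d → Ω → ℝ) (X : Fin k → Fin k → ℝ) : ℝ :=
  ∑ t, ∫ ω, (sqNormCombined z X t ω) ^ 2 ∂P

/-- `Q(X) = Σ_t √(E[‖z*_t‖₂⁴])`. -/
noncomputable def Qsum {Ω : Type*} [MeasurableSpace Ω] (P : Measure Ω) {k d : ℕ}
    (z : Fin k → Fin d → Ω → ℝ) (X : Fin k → Fin k → ℝ) : ℝ :=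
  ∑ t, Real.sqrt (∫ ω, (sqNormCombined z X t ω) ^ 2 ∂P)

/-- A `k×k` matrix is admissible when it is lower triangular (P1), has nonnegative entries,
and each row `t` sums to `1` over the columns `l ≤ t` (P2, unbiasedness). -/
def AdmissibleMatrix {k : ℕ} (X : Fin k → Fin k → ℝ) : Prop :=
  (∀ t l, t < l → X t l = 0) ∧ (∀ t l, 0 ≤ X t l) ∧ (∀ t, ∑ l ∈ Finset.Iic t, X t l = 1)

/-- The uniform-averaging matrix `X*` with `X*_{t,l} = 1/t` for `l ≤ t` and `0` otherwise
(`t` is the 1-based row index). -/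
noncomputable def Xstar (k : ℕ) : Fin k → Fin k → ℝ :=
  fun t l => if l ≤ t then 1 / ((t.1 : ℝ) + 1) else 0

/-!
Each coordinate of `z*_t` is a linear combination of independent `N(0, v)` variables, hence is
`N(0, v ‖X_t‖²)` with `‖X_t‖² = Σ_{l ≤ t} X_{t,l}²`, and distinct coordinates are independent.
The Gaussian moments `E[g²] = s`, `E[g⁴] = 3s²` then give `E‖z*_t‖² = d v ‖X_t‖²` and
`E‖z*_t‖⁴ = d(d+2) v² ‖X_t‖⁴`, so `N`, `P`, `Q` are increasing in every `‖X_t‖²`. By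
Cauchy–Schwarz a row of `t` entries summing to `1` has `‖X_t‖² ≥ 1/t`, with equality for uniform
averaging; the bounds are then `Σ_{t ≤ k} 1/t ≤ 1 + log k` and `Σ 1/t² = π²/6`.
-/

open Finset
open scoped NNReal

section Moments

variable {Ω : Type*} {mΩ : MeasurableSpace Ω} {μ : Measure Ω}

lemma MeasureTheory.MemLp.integrable_pow_of_le [IsFiniteMeasure μ] {X : Ω → ℝ} {n j : ℕ}
    (hX : MemLp X n μ) (hj : j ≤ n) : Integrable (fun ω => X ω ^ j) μ := by
  refine (hX.mono_exponent (by exact_mod_cast hj)).integrable_norm_pow'.mono'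
    (hX.aestronglyMeasurable.pow j) (Filter.Eventually.of_forall fun ω => ?_)
  simp

lemma ProbabilityTheory.IndepFun.integral_add_pow [IsFiniteMeasure μ] {X Y : Ω → ℝ}
    (hXY : IndepFun X Y μ) {n : ℕ} (hX : MemLp X n μ) (hY : MemLp Y n μ) :
    ∫ ω, (X ω + Y ω) ^ n ∂μ =
      ∑ j ∈ range (n + 1), (∫ ω, X ω ^ j ∂μ) * (∫ ω, Y ω ^ (n - j) ∂μ) * n.choose j := by
  have hpow : ∀ j, IndepFun (fun ω => X ω ^ j) (fun ω => Y ω ^ (n - j)) μ := fun j =>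
    hXY.comp (measurable_id.pow_const j) (measurable_id.pow_const (n - j))
  simp_rw [add_pow]
  rw [integral_finsetSum]
  · refine sum_congr rfl fun j _ => ?_
    rw [integral_mul_const, ← (hpow j).integral_mul_eq_mul_integral
      (hX.aestronglyMeasurable.pow j) (hY.aestronglyMeasurable.pow _)]
    rfl
  · intro j hj
    exact ((hpow j).integrable_mul (hX.integrable_pow_of_le (Nat.lt_succ_iff.mp (mem_range.mp hj)))
      (hY.integrable_pow_of_le (Nat.sub_le n j))).mul_const _

lemma ProbabilityTheory.IndepFun.integral_add_pow_four [IsProbabilityMeasure μ] {X Y : Ω → ℝ}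
    (hXY : IndepFun X Y μ) (hX : MemLp X 4 μ) (hY : MemLp Y 4 μ)
    (hX₀ : ∫ ω, X ω ∂μ = 0) (hY₀ : ∫ ω, Y ω ∂μ = 0) :
    ∫ ω, (X ω + Y ω) ^ 4 ∂μ =
      ∫ ω, X ω ^ 4 ∂μ + 6 * (∫ ω, X ω ^ 2 ∂μ) * (∫ ω, Y ω ^ 2 ∂μ) + ∫ ω, Y ω ^ 4 ∂μ := by
  rw [hXY.integral_add_pow (n := 4) (by exact_mod_cast hX) (by exact_mod_cast hY)]
  simp only [sum_range_succ, range_one, sum_singleton, pow_zero, pow_one, integral_const,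
    probReal_univ, smul_eq_mul, hX₀, hY₀, Nat.choose, Nat.reduceAdd, Nat.reduceSub, tsub_zero,
    tsub_self, Nat.cast_one, Nat.cast_ofNat]
  ring

lemma integral_sq_gaussianReal (v : ℝ≥0) : ∫ x, x ^ 2 ∂gaussianReal 0 v = v := by
  rw [← variance_id_gaussianReal,
    variance_of_integral_eq_zero aemeasurable_id integral_id_gaussianReal]
  rfl

lemma integral_pow_four_gaussianReal (v : ℝ≥0) :
    ∫ x, x ^ 4 ∂gaussianReal 0 v = 3 * (v : ℝ) ^ 2 := by
  set m := ∫ x, x ^ 4 ∂gaussianReal 0 v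
  -- For `X, Y` i.i.d. `N(0, v)`, both `√2 X` and `X + Y` are `N(0, 2v)`, so `4m = 2m + 6v²`.
  have hscale : ∫ x, x ^ 4 ∂gaussianReal 0 (v + v) = 4 * m := by
    have : gaussianReal 0 (v + v) = (gaussianReal 0 v).map (fun x => √2 * x) := by
      rw [gaussianReal_map_const_mul, mul_zero]
      congr 1
      ext
      simp only [NNReal.coe_add, NNReal.coe_mul, NNReal.coe_mk, Real.sq_sqrt zero_le_two]
      ring
    rw [this, integral_map (by fun_prop) (by fun_prop)]
    have h2 : √2 ^ 4 = (4 : ℝ) := by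
      rw [show 4 = 2 * 2 from rfl, pow_mul, Real.sq_sqrt zero_le_two]; norm_num
    simp_rw [mul_pow, integral_const_mul, h2]
    rfl
  have hsum : ∫ x, x ^ 4 ∂gaussianReal 0 (v + v) = 2 * m + 6 * (v : ℝ) ^ 2 := by
    set μ := gaussianReal 0 v
    have hfst (n : ℕ) : ∫ ω : ℝ × ℝ, ω.1 ^ n ∂μ.prod μ = ∫ x, x ^ n ∂μ := by
      simpa using integral_fun_fst (μ := μ) (ν := μ) (fun x => x ^ n)
    have hsnd (n : ℕ) : ∫ ω : ℝ × ℝ, ω.2 ^ n ∂μ.prod μ = ∫ x, x ^ n ∂μ := by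
      simpa using integral_fun_snd (μ := μ) (ν := μ) (fun x => x ^ n)
    have hind : IndepFun (Prod.fst : ℝ × ℝ → ℝ) Prod.snd (μ.prod μ) :=
      indepFun_prod measurable_id measurable_id
    have hmem : MemLp id 4 μ := memLp_id_gaussianReal 4
    rw [← add_zero (0 : ℝ), ← gaussianReal_conv_gaussianReal, Measure.conv,
      integral_map (by fun_prop) (by fun_prop),
      hind.integral_add_pow_four (hmem.comp_fst μ) (hmem.comp_snd μ),
      hfst, hfst, hsnd, hsnd, integral_sq_gaussianReal]
    · ring
    · simpa [μ] using hfst 1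
    · simpa [μ] using hsnd 1
  linarith

end Moments

section GaussianCombinations

variable {Ω ι : Type*} {mΩ : MeasurableSpace Ω} {P : Measure Ω} {Z : ι → Ω → ℝ}

lemma ProbabilityTheory.iIndepFun.indepFun_sum_mul (h : iIndepFun Z P)
    (hZ : ∀ q, AEMeasurable (Z q) P) {S T : Finset ι} (hST : Disjoint S T) (a b : ι → ℝ) :
    IndepFun (fun ω => ∑ q ∈ S, a q * Z q ω) (fun ω => ∑ q ∈ T, b q * Z q ω) P := by
  have := (h.indepFun_finset₀ S T hST hZ).comp (φ := fun w : S → ℝ => ∑ q : S, a q * w q)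
    (ψ := fun w : T → ℝ => ∑ q : T, b q * w q) (by fun_prop) (by fun_prop)
  convert this using 1 <;> ext ω <;> exact (sum_coe_sort _ _).symm

lemma ProbabilityTheory.iIndepFun.hasLaw_sum_mul_gaussianReal [IsProbabilityMeasure P]
    (h : iIndepFun Z P) {v : ℝ≥0} (hZ : ∀ q, HasLaw (Z q) (gaussianReal 0 v) P)
    (S : Finset ι) (a : ι → ℝ) :
    HasLaw (fun ω => ∑ q ∈ S, a q * Z q ω) (gaussianReal 0 (v * ∑ q ∈ S, ‖a q‖₊ ^ 2)) P := by
  classical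
  induction S using Finset.induction_on with
  | empty =>
    simpa [gaussianReal_zero_var] using hasLaw_dirac_of_ae_eq (P := P) (X := fun _ => (0 : ℝ))
      (ae_of_all _ fun _ => rfl)
  | insert q S hq ih =>
    have hind : IndepFun (fun ω => a q * Z q ω) (fun ω => ∑ q ∈ S, a q * Z q ω) P := by
      simpa using h.indepFun_sum_mul (fun q => (hZ q).aemeasurable) (S := {q}) (T := S)
        (by simpa using hq) a a
    simp_rw [sum_insert hq]
    refine ⟨((hZ q).aemeasurable.const_mul _).add ih.aemeasurable, ?_⟩
    rw [← Pi.add_def, gaussianReal_add_gaussianReal_of_indepFun hind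
      (gaussianReal_const_mul (hZ q) (a q)).map_eq ih.map_eq]
    congr 1
    · simp
    · ext; simp [mul_add, mul_comm]

end GaussianCombinations

section SumOfSquares

variable {Ω ι : Type*} {mΩ : MeasurableSpace Ω} {P : Measure Ω} {Y : Ω → ℝ} {w : ℝ≥0}

lemma ProbabilityTheory.HasLaw.memLp_gaussianReal (hY : HasLaw Y (gaussianReal 0 w) P)
    (p : ℝ≥0) : MemLp Y p P :=
  (memLp_map_measure_iff aestronglyMeasurable_id hY.aemeasurable).1
    (hY.map_eq ▸ memLp_id_gaussianReal p)

lemma ProbabilityTheory.HasLaw.integral_pow_gaussianReal (hY : HasLaw Y (gaussianReal 0 w) P)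
    (n : ℕ) : ∫ ω, Y ω ^ n ∂P = ∫ x, x ^ n ∂gaussianReal 0 w :=
  hY.integral_comp (f := fun x => x ^ n) (by fun_prop)

lemma integral_sum_sq_of_hasLaw_gaussianReal [IsFiniteMeasure P] [Fintype ι] {Y : ι → Ω → ℝ}
    (hY : ∀ i, HasLaw (Y i) (gaussianReal 0 w) P) :
    ∫ ω, ∑ i, Y i ω ^ 2 ∂P = Fintype.card ι * w := by
  rw [integral_finsetSum _ fun i _ => ((hY i).memLp_gaussianReal 2).integrable_sq]
  simp [(hY _).integral_pow_gaussianReal, integral_sq_gaussianReal]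

lemma integral_sq_sum_sq_of_hasLaw_gaussianReal [IsFiniteMeasure P] [Fintype ι] {Y : ι → Ω → ℝ}
    (hY : ∀ i, HasLaw (Y i) (gaussianReal 0 w) P)
    (hind : Pairwise fun i j => IndepFun (Y i) (Y j) P) :
    ∫ ω, (∑ i, Y i ω ^ 2) ^ 2 ∂P =
      Fintype.card ι * (Fintype.card ι + 2) * (w : ℝ) ^ 2 := by
  classical
  have hmoment (i : ι) (n : ℕ) : ∫ ω, Y i ω ^ n ∂P = ∫ x, x ^ n ∂gaussianReal 0 w :=
    (hY i).integral_pow_gaussianReal n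
  have hint (i j : ι) : Integrable (fun ω => Y i ω ^ 2 * Y j ω ^ 2) P ∧
      ∫ ω, Y i ω ^ 2 * Y j ω ^ 2 ∂P = w ^ 2 + if i = j then 2 * (w : ℝ) ^ 2 else 0 := by
    rcases eq_or_ne i j with rfl | hij
    · simp_rw [← pow_add]
      refine ⟨((hY i).memLp_gaussianReal 4).integrable_pow_of_le le_rfl, ?_⟩
      rw [hmoment, integral_pow_four_gaussianReal]
      rw [if_pos trivial]
      ring
    · have hsq := (hind hij).comp (measurable_id.pow_const 2) (measurable_id.pow_const 2)
      refine ⟨hsq.integrable_mul ((hY i).memLp_gaussianReal 2).integrable_sq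
        ((hY j).memLp_gaussianReal 2).integrable_sq, ?_⟩
      have hmul := hsq.integral_mul_eq_mul_integral
        ((hY i).aemeasurable.pow_const 2).aestronglyMeasurable
        ((hY j).aemeasurable.pow_const 2).aestronglyMeasurable
      simp only [Function.comp_def, Pi.mul_apply, id] at hmul
      rw [hmul, hmoment, hmoment, integral_sq_gaussianReal, if_neg hij]
      ring
  simp_rw [sq (∑ i, _), sum_mul_sum]
  rw [integral_finsetSum _ fun i _ => integrable_finsetSum _ fun j _ => (hint i j).1]
  simp_rw [integral_finsetSum _ fun j _ => (hint _ j).1, fun i j => (hint i j).2]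
  simp only [sum_add_distrib, sum_const, card_univ, nsmul_eq_mul, sum_ite_eq, mem_univ,
    if_true]
  ring

end SumOfSquares

def rowSqNorm {k : ℕ} (X : Fin k → Fin k → ℝ) (t : Fin k) : ℝ :=
  ∑ l ∈ Iic t, X t l ^ 2

lemma inv_succ_le_rowSqNorm {k : ℕ} {X : Fin k → Fin k → ℝ} {t : Fin k}
    (hX : ∑ l ∈ Iic t, X t l = 1) : 1 / ((t : ℕ) + 1 : ℝ) ≤ rowSqNorm X t := by
  have hcs := sq_sum_le_card_mul_sum_sq (s := Iic t) (f := X t)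
  rw [hX, Fin.card_Iic, one_pow] at hcs
  rw [rowSqNorm, div_le_iff₀ (by positivity)]
  push_cast at hcs
  linarith

lemma rowSqNorm_Xstar {k : ℕ} (t : Fin k) : rowSqNorm (Xstar k) t = 1 / ((t : ℕ) + 1 : ℝ) := by
  have hrow : ∀ l ∈ Iic t, Xstar k t l ^ 2 = (1 / ((t : ℕ) + 1 : ℝ)) ^ 2 := fun l hl => by
    rw [Xstar, if_pos (mem_Iic.mp hl)]
  rw [rowSqNorm, sum_congr rfl hrow, sum_const, Fin.card_Iic, nsmul_eq_mul]
  field_simp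
  push_cast
  ring

lemma sum_inv_succ_le_one_add_log (k : ℕ) :
    ∑ t : Fin k, 1 / ((t : ℕ) + 1 : ℝ) ≤ 1 + Real.log k := by
  have hH : ∑ t : Fin k, 1 / ((t : ℕ) + 1 : ℝ) = harmonic k := by
    rw [Fin.sum_univ_eq_sum_range (fun i => 1 / ((i : ℝ) + 1)), harmonic]
    push_cast
    simp [one_div]
  exact hH ▸ mod_cast harmonic_le_one_add_log k

lemma sum_inv_succ_sq_le_pi_sq_div_six (k : ℕ) :
    ∑ t : Fin k, (1 / ((t : ℕ) + 1 : ℝ)) ^ 2 ≤ Real.pi ^ 2 / 6 := by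
  rw [Fin.sum_univ_eq_sum_range (fun i => (1 / ((i : ℝ) + 1)) ^ 2)]
  have hzeta : HasSum (fun n : ℕ => (1 / ((n : ℝ) + 1)) ^ 2) (Real.pi ^ 2 / 6) := by
    simpa [div_pow] using (hasSum_nat_add_iff' 1).2 hasSum_zeta_two
  exact sum_le_hasSum _ (fun _ _ => by positivity) hzeta

section NoiseModel

variable {Ω : Type*} [MeasurableSpace Ω] {P : Measure Ω} {k d : ℕ}
  {z : Fin k → Fin d → Ω → ℝ} {v : ℝ≥0}
  (hz : ∀ l i, HasLaw (z l i) (gaussianReal 0 v) P)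
  (hindep : iIndepFun (fun (q : Fin k × Fin d) ω => z q.1 q.2 ω) P)

include hz hindep

lemma hasLaw_sum_mul_coord [IsProbabilityMeasure P] (s : Finset (Fin k)) (a : Fin k → ℝ)
    (i : Fin d) :
    HasLaw (fun ω => ∑ l ∈ s, a l * z l i ω) (gaussianReal 0 (v * ∑ l ∈ s, ‖a l‖₊ ^ 2)) P := by
  simpa using hindep.hasLaw_sum_mul_gaussianReal (fun q => hz q.1 q.2)
    (s.map (.sectL _ i)) (fun q => a q.1)

lemma indepFun_sum_mul_coord (s : Finset (Fin k)) (a : Fin k → ℝ) {i j : Fin d} (hij : i ≠ j) :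
    IndepFun (fun ω => ∑ l ∈ s, a l * z l i ω) (fun ω => ∑ l ∈ s, a l * z l j ω) P := by
  simpa using hindep.indepFun_sum_mul (fun q => (hz q.1 q.2).aemeasurable)
    (S := s.map (.sectL _ i)) (T := s.map (.sectL _ j)) (by simp [disjoint_left, hij.symm])
    (fun q => a q.1) (fun q => a q.1)

lemma integral_sqNormCombined [IsProbabilityMeasure P] (X : Fin k → Fin k → ℝ) (t : Fin k) :
    ∫ ω, sqNormCombined z X t ω ∂P = d * (v * rowSqNorm X t) := by
  unfold sqNormCombined
  rw [integral_sum_sq_of_hasLaw_gaussianReal fun i => hasLaw_sum_mul_coord hz hindep _ (X t) i]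
  simp [rowSqNorm]

lemma integral_sqNormCombined_sq [IsProbabilityMeasure P] (X : Fin k → Fin k → ℝ) (t : Fin k) :
    ∫ ω, sqNormCombined z X t ω ^ 2 ∂P = d * (d + 2) * (v * rowSqNorm X t) ^ 2 := by
  unfold sqNormCombined
  rw [integral_sq_sum_sq_of_hasLaw_gaussianReal
    (fun i => hasLaw_sum_mul_coord hz hindep _ (X t) i)
    (fun _ _ hij => indepFun_sum_mul_coord hz hindep _ (X t) hij)]
  simp [rowSqNorm]

variable [IsProbabilityMeasure P] (X : Fin k → Fin k → ℝ)

lemma Nsum_eq_sum_rowSqNorm : Nsum P z X = d * v * ∑ t, rowSqNorm X t := by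
  rw [Nsum, mul_sum]
  exact sum_congr rfl fun t _ => by rw [integral_sqNormCombined hz hindep]; ring

lemma Psum_eq_sum_rowSqNorm_sq : Psum P z X = d * (d + 2) * v ^ 2 * ∑ t, rowSqNorm X t ^ 2 := by
  rw [Psum, mul_sum]
  exact sum_congr rfl fun t _ => by rw [integral_sqNormCombined_sq hz hindep]; ring

lemma Qsum_eq_sum_rowSqNorm : Qsum P z X = √(d * (d + 2)) * v * ∑ t, rowSqNorm X t := by
  rw [Qsum, mul_sum]
  refine sum_congr rfl fun t _ => ?_
  have : 0 ≤ rowSqNorm X t := sum_nonneg fun _ _ => sq_nonneg _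
  rw [integral_sqNormCombined_sq hz hindep, Real.sqrt_mul (by positivity),
    Real.sqrt_sq (by positivity)]
  ring

end NoiseModel

theorem stmt_11_general {Ω : Type*} [MeasurableSpace Ω] (P : Measure Ω) [IsProbabilityMeasure P]
    (k d : ℕ) (C σ : ℝ)
    (z : Fin k → Fin d → Ω → ℝ)
    (hlaw : ∀ l i, Measure.map (z l i) P = gaussianReal 0 (((k : ℝ) * (C * σ) ^ 2).toNNReal))
    (hindep : iIndepFun
      (fun (q : Fin k × Fin d) ω => z q.1 q.2 ω) P) :
    (∀ X : Fin k → Fin k → ℝ, AdmissibleMatrix X →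
      Nsum P z (Xstar k) ≤ Nsum P z X ∧ Psum P z (Xstar k) ≤ Psum P z X
        ∧ Qsum P z (Xstar k) ≤ Qsum P z X) ∧
    Nsum P z (Xstar k) ≤ d * k * (C * σ) ^ 2 * (1 + Real.log k) ∧
    Psum P z (Xstar k) ≤ d * (d + 2) * (k : ℝ) ^ 2 * (C * σ) ^ 4 * Real.pi ^ 2 / 6 ∧
    Qsum P z (Xstar k) ≤ Real.sqrt (d * (d + 2)) * k * (C * σ) ^ 2 * (1 + Real.log k) := by
  set v := ((k : ℝ) * (C * σ) ^ 2).toNNReal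
  have hv : (v : ℝ) = k * (C * σ) ^ 2 := Real.coe_toNNReal _ (by positivity)
  have hz (l : Fin k) (i : Fin d) : HasLaw (z l i) (gaussianReal 0 v) P :=
    ⟨.of_map_ne_zero (by rw [hlaw]; exact IsProbabilityMeasure.ne_zero _), hlaw l i⟩
  simp only [Nsum_eq_sum_rowSqNorm hz hindep, Psum_eq_sum_rowSqNorm_sq hz hindep,
    Qsum_eq_sum_rowSqNorm hz hindep, rowSqNorm_Xstar, hv]
  have hharm := sum_inv_succ_le_one_add_log k
  have hbasel := sum_inv_succ_sq_le_pi_sq_div_six k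
  refine ⟨fun X hX => ?_, ?_, ?_, ?_⟩
  · have hrow (t : Fin k) := inv_succ_le_rowSqNorm (hX.2.2 t)
    refine ⟨?_, ?_, ?_⟩ <;> gcongr with t <;> exact hrow t
  · exact (mul_le_mul_of_nonneg_left hharm (by positivity)).trans_eq (by ring)
  · exact (mul_le_mul_of_nonneg_left hbasel (by positivity)).trans_eq (by ring)
  · exact (mul_le_mul_of_nonneg_left hharm (by positivity)).trans_eq (by ring)

/-- For i.i.d. `z_l ~ N(0, k(Cσ)² I_d)`, the uniform-averaging matrix `X*`
minimizes each of `N`, `P`, `Q` over all lower-triangular nonnegative matrices with unit row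
sums, and `N(X*) ≤ dk(Cσ)²(1 + log k)`, `P(X*) ≤ d(d+2)k²(Cσ)⁴π²/6`, and
`Q(X*) ≤ √(d(d+2))·k(Cσ)²(1 + log k)`. -/
theorem stmt_11 {Ω : Type*} [MeasurableSpace Ω] (P : Measure Ω) [IsProbabilityMeasure P]
    (k d : ℕ) (hk : 0 < k) (hd : 0 < d) (C σ : ℝ) (hC : 0 < C) (hσ : 0 < σ)
    (z : Fin k → Fin d → Ω → ℝ)
    (hmeas : ∀ l i, Measurable (z l i))
    (hlaw : ∀ l i, Measure.map (z l i) P = gaussianReal 0 (((k : ℝ) * (C * σ) ^ 2).toNNReal))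
    (hindep : iIndepFun
      (fun (q : Fin k × Fin d) ω => z q.1 q.2 ω) P) :
    (∀ X : Fin k → Fin k → ℝ, AdmissibleMatrix X →
      Nsum P z (Xstar k) ≤ Nsum P z X ∧ Psum P z (Xstar k) ≤ Psum P z X
        ∧ Qsum P z (Xstar k) ≤ Qsum P z X) ∧
    Nsum P z (Xstar k) ≤ d * k * (C * σ) ^ 2 * (1 + Real.log k) ∧
    Psum P z (Xstar k) ≤ d * (d + 2) * (k : ℝ) ^ 2 * (C * σ) ^ 4 * Real.pi ^ 2 / 6 ∧
    Qsum P z (Xstar k) ≤ Real.sqrt (d * (d + 2)) * k * (C * σ) ^ 2 * (1 + Real.log k) :=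
  stmt_11_general P k d C σ z hlaw hindep
end

section
/- Let z be a random vector in ℝ^d whose coordinates are independent, each with a distribution symmetric about 0 and finite fourth moment. Let g ≥ 0 be a real number, v ∈ ℝ^d an arbitrary vector, and m > 0. Then E[(g + v^T z + (m/2)‖z‖₂²)²] ≥ g² + (m²/4)·E[‖z‖₂⁴]. -/
/-!
Write `A = g + (m/2)‖z‖²` and `L = vᵀz`. Every mixed moment `E[zᵢ zⱼ²]` vanishes (by symmetry of
`zᵢ` when `i = j`, by independence and `E[zᵢ] = 0` otherwise), so `L` is orthogonal to `A` in `L²`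
and `E[(A + L)²] ≥ E[A²]`. Finally `A² ≥ g² + (m²/4)‖z‖⁴` pointwise because `g, m, ‖z‖² ≥ 0`.
-/

open MeasureTheory ProbabilityTheory

section

variable {Ω : Type*} [MeasurableSpace Ω] {P : Measure Ω}

theorem integral_comp_eq_zero_of_odd {X : Ω → ℝ} (hX : AEMeasurable X P)
    (hsymm : P.map X = P.map (fun ω => -X ω)) {f : ℝ → ℝ} (hf : Measurable f)
    (hodd : Function.Odd f) : ∫ ω, f (X ω) ∂P = 0 := by
  have h := congrArg (fun μ => ∫ t, f t ∂μ) hsymm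
  simp only [integral_map hX hf.aestronglyMeasurable,
    integral_map (φ := fun ω => -X ω) hX.neg hf.aestronglyMeasurable, hodd _, integral_neg] at h
  linarith

theorem MeasureTheory.MemLp.sq {X : Ω → ℝ} (hX : MemLp X 4 P) :
    MemLp (fun ω => X ω ^ 2) 2 P := by
  refine (memLp_two_iff_integrable_sq (f := fun ω => X ω ^ 2) (hX.1.pow 2)).2 ?_
  refine (hX.integrable_norm_pow (p := 4) (by norm_num)).congr (.of_forall fun ω => ?_)
  change ‖X ω‖ ^ 4 = (X ω ^ 2) ^ 2
  rw [← pow_mul, Real.norm_eq_abs, ← abs_pow, abs_of_nonneg (by positivity)]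

theorem integral_sq_le_integral_add_sq_of_integral_mul_eq_zero {A L : Ω → ℝ}
    (hA : MemLp A 2 P) (hL : MemLp L 2 P) (horth : ∫ ω, A ω * L ω ∂P = 0) :
    ∫ ω, A ω ^ 2 ∂P ≤ ∫ ω, (A ω + L ω) ^ 2 ∂P := by
  have hAL : Integrable (fun ω => 2 * (A ω * L ω)) P := (hA.integrable_mul hL).const_mul 2
  have hexpand : ∫ ω, (A ω + L ω) ^ 2 ∂P
      = ∫ ω, A ω ^ 2 ∂P + 2 * ∫ ω, A ω * L ω ∂P + ∫ ω, L ω ^ 2 ∂P := by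
    simp_rw [add_sq, mul_assoc]
    rw [integral_add (f := fun ω => A ω ^ 2 + 2 * (A ω * L ω)) (hA.integrable_sq.add hAL)
      hL.integrable_sq, integral_add hA.integrable_sq hAL, integral_const_mul]
  rw [hexpand, horth]
  linarith [integral_nonneg (f := fun ω => L ω ^ 2) (μ := P) fun ω => sq_nonneg (L ω)]

end

section

variable {Ω ι : Type*} [MeasurableSpace Ω] {P : Measure Ω}
  {z : ι → Ω → ℝ}

theorem integral_mul_sq_eq_zero_of_iIndepFun (hindep : iIndepFun z P)
    (hsymm : ∀ i, P.map (z i) = P.map (fun ω => -z i ω)) (hmeas : ∀ i, AEMeasurable (z i) P)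
    (i j : ι) : ∫ ω, z i ω * z j ω ^ 2 ∂P = 0 := by
  rcases eq_or_ne i j with rfl | hij
  · exact integral_comp_eq_zero_of_odd (hmeas i) (hsymm i) (f := fun t => t * t ^ 2)
      (by fun_prop) fun t => by ring
  · have hmean : ∫ ω, z i ω ∂P = 0 :=
      integral_comp_eq_zero_of_odd (hmeas i) (hsymm i) (f := id) measurable_id fun _ => rfl
    have h := ((hindep.indepFun hij).comp measurable_id (measurable_id.pow_const 2)
      ).integral_mul_eq_mul_integral (hmeas i).aestronglyMeasurable
        ((hmeas j).pow_const 2).aestronglyMeasurable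
    simpa [hmean] using h

theorem integral_mul_quadratic_eq_zero [IsFiniteMeasure P] [Fintype ι]
    (hindep : iIndepFun z P) (hsymm : ∀ i, P.map (z i) = P.map (fun ω => -z i ω))
    (hL4 : ∀ i, MemLp (z i) 4 P) (c a : ℝ) (i : ι) :
    ∫ ω, z i ω * (c + a * ∑ j, z j ω ^ 2) ∂P = 0 := by
  have hzz : ∀ j, Integrable (fun ω => z i ω * z j ω ^ 2) P := fun j =>
    ((hL4 i).mono_exponent (p := 2) (by norm_num)).integrable_mul (hL4 j).sq
  have hlin : Integrable (fun ω => c * z i ω) P := ((hL4 i).integrable (by norm_num)).const_mul c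
  have hquad : Integrable (fun ω => a * ∑ j, z i ω * z j ω ^ 2) P :=
    (integrable_finsetSum _ fun j _ => hzz j).const_mul a
  have hmean : ∫ ω, z i ω ∂P = 0 :=
    integral_comp_eq_zero_of_odd (hL4 i).1.aemeasurable (hsymm i) (f := id) measurable_id
      fun _ => rfl
  have hexpand : (fun ω => z i ω * (c + a * ∑ j, z j ω ^ 2))
      = fun ω => c * z i ω + a * ∑ j, z i ω * z j ω ^ 2 := by
    ext ω
    rw [← Finset.mul_sum]
    ring
  rw [hexpand, integral_add hlin hquad, integral_const_mul, integral_const_mul,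
    integral_finsetSum _ fun j _ => hzz j]
  simp [hmean, integral_mul_sq_eq_zero_of_iIndepFun hindep hsymm
    fun k => (hL4 k).1.aemeasurable]

theorem integral_quadratic_mul_linear_eq_zero [IsFiniteMeasure P] [Fintype ι]
    (hindep : iIndepFun z P) (hsymm : ∀ i, P.map (z i) = P.map (fun ω => -z i ω))
    (hL4 : ∀ i, MemLp (z i) 4 P) (c a : ℝ) (v : ι → ℝ) :
    ∫ ω, (c + a * ∑ j, z j ω ^ 2) * ∑ i, v i * z i ω ∂P = 0 := by
  have hquad : MemLp (fun ω => c + a * ∑ j, z j ω ^ 2) 2 P :=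
    (memLp_const c).add ((memLp_finsetSum _ fun j _ => (hL4 j).sq).const_mul a)
  have hterm : ∀ i, Integrable (fun ω => v i * (z i ω * (c + a * ∑ j, z j ω ^ 2))) P := fun i =>
    (((hL4 i).mono_exponent (p := 2) (by norm_num)).integrable_mul hquad).const_mul (v i)
  have hexpand : (fun ω => (c + a * ∑ j, z j ω ^ 2) * ∑ i, v i * z i ω)
      = fun ω => ∑ i, v i * (z i ω * (c + a * ∑ j, z j ω ^ 2)) := by
    ext ω
    rw [Finset.mul_sum]
    exact Finset.sum_congr rfl fun i _ => by ring
  rw [hexpand, integral_finsetSum _ fun i _ => hterm i]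
  simp [integral_const_mul, integral_mul_quadratic_eq_zero hindep hsymm hL4]

end

theorem stmt_18_general {Ω : Type*} [MeasurableSpace Ω] (P : Measure Ω) [IsProbabilityMeasure P]
    (d : ℕ) (z : Fin d → Ω → ℝ)
    (hindep : iIndepFun (m := fun _ : Fin d => (inferInstance : MeasurableSpace ℝ)) z P)
    (hsymm : ∀ i, Measure.map (z i) P = Measure.map (fun ω => -(z i ω)) P)
    (hL4 : ∀ i, MemLp (z i) 4 P)
    (g : ℝ) (hg : 0 ≤ g) (v : Fin d → ℝ) (m : ℝ) (hm : 0 < m) :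
    g ^ 2 + m ^ 2 / 4 * (∫ ω, (∑ i, (z i ω) ^ 2) ^ 2 ∂P)
      ≤ ∫ ω, (g + (∑ i, v i * z i ω) + m / 2 * ∑ i, (z i ω) ^ 2) ^ 2 ∂P := by
  have hS : MemLp (fun ω => ∑ i, z i ω ^ 2) 2 P := memLp_finsetSum _ fun i _ => (hL4 i).sq
  have hA : MemLp (fun ω => g + m / 2 * ∑ i, z i ω ^ 2) 2 P :=
    (memLp_const g).add (hS.const_mul _)
  have hL : MemLp (fun ω => ∑ i, v i * z i ω) 2 P :=
    memLp_finsetSum _ fun i _ => ((hL4 i).mono_exponent (p := 2) (by norm_num)).const_mul (v i)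
  calc g ^ 2 + m ^ 2 / 4 * (∫ ω, (∑ i, (z i ω) ^ 2) ^ 2 ∂P)
      = ∫ ω, g ^ 2 + m ^ 2 / 4 * (∑ i, z i ω ^ 2) ^ 2 ∂P := by
        rw [integral_add (integrable_const _) (hS.integrable_sq.const_mul _), integral_const_mul]
        simp
    _ ≤ ∫ ω, (g + m / 2 * ∑ i, z i ω ^ 2) ^ 2 ∂P := by
        refine integral_mono ((integrable_const _).add (hS.integrable_sq.const_mul _))
          hA.integrable_sq fun ω => ?_
        have hSω : 0 ≤ ∑ i, z i ω ^ 2 := Finset.sum_nonneg fun i _ => sq_nonneg _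
        nlinarith [mul_nonneg (mul_nonneg hg hm.le) hSω]
    _ ≤ ∫ ω, (g + m / 2 * ∑ i, z i ω ^ 2 + ∑ i, v i * z i ω) ^ 2 ∂P :=
        integral_sq_le_integral_add_sq_of_integral_mul_eq_zero hA hL
          (integral_quadratic_mul_linear_eq_zero hindep hsymm hL4 g (m / 2) v)
    _ = ∫ ω, (g + (∑ i, v i * z i ω) + m / 2 * ∑ i, (z i ω) ^ 2) ^ 2 ∂P := by
        congr 1 with ω
        ring

/-- Let `z` be a random vector in `ℝ^d` whose coordinates are independent,
each symmetric about `0` with finite fourth moment. For `g ≥ 0`, `v ∈ ℝ^d` and `m > 0`,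
`E[(g + vᵀz + (m/2)‖z‖₂²)²] ≥ g² + (m²/4)·E[‖z‖₂⁴]`. -/
theorem stmt_18 {Ω : Type*} [MeasurableSpace Ω] (P : Measure Ω) [IsProbabilityMeasure P]
    (d : ℕ) (z : Fin d → Ω → ℝ)
    (hmeas : ∀ i, Measurable (z i))
    (hindep : iIndepFun (m := fun _ : Fin d => (inferInstance : MeasurableSpace ℝ)) z P)
    (hsymm : ∀ i, Measure.map (z i) P = Measure.map (fun ω => -(z i ω)) P)
    (hL4 : ∀ i, MemLp (z i) 4 P)
    (g : ℝ) (hg : 0 ≤ g) (v : Fin d → ℝ) (m : ℝ) (hm : 0 < m) :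
    g ^ 2 + m ^ 2 / 4 * (∫ ω, (∑ i, (z i ω) ^ 2) ^ 2 ∂P)
      ≤ ∫ ω, (g + (∑ i, v i * z i ω) + m / 2 * ∑ i, (z i ω) ^ 2) ^ 2 ∂P :=
  stmt_18_general P d z hindep hsymm hL4 g hg v m hm
end

section
/- Let s > 0 and K ≥ s, and let X be a real random variable distributed as a centered Gaussian of variance s² conditioned on the event |X| ≤ K (a symmetric truncated normal). Then Var[X] ≥ 0.02 · s². -/
open MeasureTheory ProbabilityTheory

/-!
Conditioning on the symmetric event `|X| ≤ K` keeps the law symmetric, so the conditioned variable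
has mean zero and its variance is its second moment. On `[s/2, s]` the Gaussian density is at least
`1/(6s)` (use `exp (-y) ≥ 1 - y` and `√(2π) ≤ 3`), so that interval has Gaussian mass at least
`1/12`; since `K ≥ s` it lies inside the conditioning event, where conditioning only increases
mass. Markov's inequality for `X²` then gives `Var X ≥ (s/2)² / 12 = s² / 48`.
-/

open Set
open scoped NNReal ENNReal

section Symmetric

variable {μ : Measure ℝ}

lemma integral_id_eq_zero_of_map_neg_eq (hμ : μ.map (fun x ↦ -x) = μ) : ∫ x, x ∂μ = 0 := by
  have h : ∫ x, x ∂μ = ∫ x, -x ∂μ := by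
    conv_lhs => rw [← hμ]
    exact integral_map measurable_neg.aemeasurable aestronglyMeasurable_id
  rw [integral_neg] at h
  linarith

lemma variance_id_eq_integral_sq_of_map_neg_eq (hμ : μ.map (fun x ↦ -x) = μ) :
    variance (fun x : ℝ ↦ x) μ = ∫ x, x ^ 2 ∂μ :=
  variance_of_integral_eq_zero aemeasurable_id (integral_id_eq_zero_of_map_neg_eq hμ)

end Symmetric

lemma map_cond_eq_self {Ω : Type*} [MeasurableSpace Ω] {μ : Measure Ω} {f : Ω → Ω} {s : Set Ω}
    (hf : Measurable f) (hμ : μ.map f = μ) (hs : MeasurableSet s) (hfs : f ⁻¹' s = s) :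
    (μ[|s]).map f = μ[|s] := by
  ext t ht
  rw [Measure.map_apply hf ht, cond_apply hs, cond_apply hs, ← hfs, ← preimage_inter,
    ← Measure.map_apply hf (hs.inter ht), hμ, hfs]

lemma le_cond_of_subset {Ω : Type*} [MeasurableSpace Ω] {μ : Measure Ω} [IsProbabilityMeasure μ]
    {s t : Set Ω} (hs : MeasurableSet s) (hts : t ⊆ s) : μ t ≤ μ[t|s] := by
  rw [cond_apply hs, inter_eq_self_of_subset_right hts]
  exact le_mul_of_one_le_left' (ENNReal.one_le_inv.2 prob_le_one)

lemma inv_six_mul_sqrt_le_gaussianPDFReal {μ x : ℝ} {v : ℝ≥0} (hv : v ≠ 0)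
    (hx : (x - μ) ^ 2 ≤ v) : (6 * √v)⁻¹ ≤ gaussianPDFReal μ v x := by
  have hexp : 1 / 2 ≤ Real.exp (-(x - μ) ^ 2 / (2 * v)) := by
    have : (x - μ) ^ 2 / (2 * v) ≤ 1 / 2 := by
      rw [div_le_iff₀ (by positivity)]
      linarith
    linarith [Real.add_one_le_exp (-(x - μ) ^ 2 / (2 * v)), neg_div (2 * (v : ℝ)) ((x - μ) ^ 2)]
  have hsqrt : √(2 * Real.pi * v) ≤ 3 * √v := by
    rw [Real.sqrt_mul (by positivity)]
    gcongr
    rw [Real.sqrt_le_left (by norm_num)]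
    linarith [Real.pi_le_four]
  rw [gaussianPDFReal]
  calc (6 * √v)⁻¹ = (3 * √v)⁻¹ * (1 / 2) := by ring
    _ ≤ (√(2 * Real.pi * v))⁻¹ * Real.exp (-(x - μ) ^ 2 / (2 * v)) := by
      gcongr

lemma ofReal_le_gaussianReal_Icc {μ a b : ℝ} {v : ℝ≥0} (hv : v ≠ 0) (ha : μ - √v ≤ a)
    (hb : b ≤ μ + √v) : ENNReal.ofReal ((b - a) / (6 * √v)) ≤ gaussianReal μ v (Icc a b) := by
  have hdens : ∀ x ∈ Icc a b, ENNReal.ofReal (6 * √v)⁻¹ ≤ gaussianPDF μ v x := by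
    intro x hx
    refine ENNReal.ofReal_le_ofReal (inv_six_mul_sqrt_le_gaussianPDFReal hv ?_)
    calc (x - μ) ^ 2 ≤ √v ^ 2 := sq_le_sq' (by linarith [hx.1]) (by linarith [hx.2])
      _ = v := Real.sq_sqrt v.2
  calc ENNReal.ofReal ((b - a) / (6 * √v)) = ∫⁻ _ in Icc a b, ENNReal.ofReal (6 * √v)⁻¹ := by
        rw [setLIntegral_const, Real.volume_Icc, ← ENNReal.ofReal_mul (by positivity),
          div_eq_inv_mul]
    _ ≤ ∫⁻ x in Icc a b, gaussianPDF μ v x := setLIntegral_mono (measurable_gaussianPDF μ v) hdens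
    _ = gaussianReal μ v (Icc a b) := (gaussianReal_apply μ hv _).symm

/-- For `s > 0` and `K ≥ s`, a centered Gaussian of variance `s²` conditioned
on `|X| ≤ K` (a symmetric truncated normal) has variance at least `0.02 s²`. -/
theorem stmt_19 (s K : ℝ) (hs : 0 < s) (hK : s ≤ K) :
    0.02 * s ^ 2
      ≤ variance (fun x : ℝ => x)
          ((gaussianReal 0 ((s ^ 2).toNNReal))[|{x : ℝ | |x| ≤ K}]) := by
  set μ := gaussianReal 0 (s ^ 2).toNNReal
  set S := {x : ℝ | |x| ≤ K}
  have hS : MeasurableSet S := measurableSet_le measurable_abs measurable_const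
  have hIS : Icc (s / 2) s ⊆ S := fun x hx ↦ abs_le.2 ⟨by linarith [hx.1], hx.2.trans hK⟩
  have hI : ENNReal.ofReal (1 / 12) ≤ μ (Icc (s / 2) s) := by
    have hσ : √((s ^ 2).toNNReal : ℝ) = s := by
      rw [Real.coe_toNNReal _ (sq_nonneg s), Real.sqrt_sq hs.le]
    have h := ofReal_le_gaussianReal_Icc (μ := 0) (v := (s ^ 2).toNNReal) (a := s / 2) (b := s)
      (Real.toNNReal_pos.2 (by positivity)).ne' (by rw [hσ]; linarith) (by rw [hσ]; linarith)
    rwa [hσ, show (s - s / 2) / (6 * s) = 1 / 12 by field_simp; ring] at h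
  have : IsProbabilityMeasure μ[|S] :=
    cond_isProbabilityMeasure fun h ↦ by
      simpa using hI.trans ((measure_mono hIS).trans h.le)
  have hsym : (μ[|S]).map (fun x ↦ -x) = μ[|S] :=
    map_cond_eq_self measurable_neg (by simpa using gaussianReal_map_neg (μ := 0))
      hS (by ext; simp [S])
  have hsq : Integrable (fun x : ℝ ↦ x ^ 2) μ[|S] :=
    (MemLp.of_bound aestronglyMeasurable_id K
      (ae_cond_of_forall_mem hS fun _ hx ↦ hx)).integrable_sq
  rw [variance_id_eq_integral_sq_of_map_neg_eq hsym]
  calc 0.02 * s ^ 2 ≤ (s / 2) ^ 2 * (μ[|S]).real (Icc (s / 2) s) := by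
        have hcond : 1 / 12 ≤ (μ[|S]).real (Icc (s / 2) s) :=
          (ENNReal.ofReal_le_iff_le_toReal (measure_ne_top _ _)).1
            (hI.trans (le_cond_of_subset hS hIS))
        nlinarith
    _ ≤ (s / 2) ^ 2 * (μ[|S]).real {x | (s / 2) ^ 2 ≤ x ^ 2} := by
        gcongr (s / 2) ^ 2 * ?_
        exact measureReal_mono fun x hx ↦ pow_le_pow_left₀ (by linarith) hx.1 2
    _ ≤ ∫ x, x ^ 2 ∂μ[|S] :=
        mul_meas_ge_le_integral_of_nonneg (.of_forall fun x ↦ sq_nonneg x) hsq _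
end
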